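/- Let T = 2I be twice the 2×2 identity matrix and D = { (0,0)ᵀ, (1,0)ᵀ, (0,1)ᵀ, (−1,−1)ᵀ } ⊂ ℤ². Then the attractor F(T,D) (the Sierpiński tile) is connected and has positive Lebesgue measure. -/

import Mathlib

open MeasureTheory

/-- The canonical cast of an integer vector to a real vector. -/
def castVec {k : ℕ} (d : Fin k → ℤ) : Fin k → ℝ := fun i => (d i : ℝ)

open Filter Metric Set Topology
open scoped NNReal Pointwise

/-!
With the branches `φ_d x = (x + d) / 2` we have `F = ⋃ φ_d '' F`. Each digit `d` is the
fixed point of the contraction `φ_d`, hence lies in `F`, and then `(d + e) / 2 = φ_d e = φ_e d`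
lies in both pieces `φ_d '' F` and `φ_e '' F`. Pieces that meet pairwise make `F` chain connected
at every scale, and a compact set that is chain connected at every scale is connected.

For the measure, `D` is a complete set of residues modulo `2`, so the closed set `F + ℤⁿ` contains
`ℤⁿ` and is stable under halving. It therefore contains every dyadic point and is all of `ℝⁿ`,
and a countable union of translates of a null set cannot cover `ℝⁿ`.
-/

theorem mapsTo_of_eq_iUnion_image {X ι : Type*} {s : Set ι} {f : ι → X → X} {F : Set X}
    (hfix : F = ⋃ i ∈ s, f i '' F) {i : ι} (hi : i ∈ s) : MapsTo (f i) F F := fun x hx => by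
  rw [hfix]; exact mem_biUnion hi (mem_image_of_mem _ hx)

section ChainConnected

variable {X : Type*} [MetricSpace X]

theorem IsCompact.isPreconnected_of_forall_chain {F : Set X} (hF : IsCompact F)
    (hchain : ∀ ε > 0, ∀ x ∈ F, ∀ y ∈ F,
      Relation.ReflTransGen (fun a b => b ∈ F ∧ dist a b < ε) x y) :
    IsPreconnected F := by
  rw [isPreconnected_iff_subset_of_disjoint_closed]
  intro u v hu hv hcover huv
  by_cases hFu : (F ∩ u).Nonempty
  · obtain ⟨x, hxF, hxu⟩ := hFu
    have hdisj : Disjoint (F ∩ u) (F ∩ v) :=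
      disjoint_left.2 fun z ⟨hz, hzu⟩ ⟨_, hzv⟩ => huv.subset ⟨hz, hzu, hzv⟩
    obtain ⟨r, hr, hsep⟩ :=
      exists_pos_forall_lt_edist (hF.inter_right hu) (hF.isClosed.inter hv) hdisj
    suffices ∀ y, Relation.ReflTransGen (fun a b => b ∈ F ∧ dist a b < r) x y → y ∈ F ∩ u from
      Or.inl fun y hy => (this y (hchain r hr x hxF y hy)).2
    intro y hxy
    induction hxy with
    | refl => exact ⟨hxF, hxu⟩
    | @tail b c _ hbc hb =>
      refine ⟨hbc.1, (hcover hbc.1).resolve_right fun hcv => ?_⟩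
      exact (hsep b hb c ⟨hbc.1, hcv⟩).not_gt
        (by rw [← ENNReal.ofReal_coe_nnreal, edist_lt_ofReal]; exact hbc.2)
  · exact Or.inr fun y hy => (hcover hy).resolve_left fun hyu => hFu ⟨y, hy, hyu⟩

theorem chain_of_eq_iUnion_image {ι : Type*} {s : Set ι} {f : ι → X → X} {K : ℝ≥0}
    (hf : ∀ i ∈ s, LipschitzWith K (f i)) {F : Set X} (hfix : F = ⋃ i ∈ s, f i '' F)
    (hmeet : ∀ i ∈ s, ∀ j ∈ s, (f i '' F ∩ f j '' F).Nonempty)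
    {C : ℝ} (hC : ∀ x ∈ F, ∀ y ∈ F, dist x y ≤ C) (n : ℕ) :
    ∀ x ∈ F, ∀ y ∈ F, Relation.ReflTransGen (fun a b => b ∈ F ∧ dist a b ≤ K ^ n * C) x y := by
  induction n with
  | zero => exact fun x hx y hy => .single ⟨hy, by simpa using hC x hx y hy⟩
  | succ n ih =>
    have hlift : ∀ i ∈ s, ∀ a ∈ F, ∀ b ∈ F,
        Relation.ReflTransGen (fun a b => b ∈ F ∧ dist a b ≤ K ^ (n + 1) * C) (f i a) (f i b) := by
      intro i hi a ha b hb
      refine (ih a ha b hb).lift (f i) fun p q ⟨hq, hpq⟩ =>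
        ⟨mapsTo_of_eq_iUnion_image hfix hi hq, ?_⟩
      calc dist (f i p) (f i q) ≤ K * dist p q := (hf i hi).dist_le_mul p q
        _ ≤ K * (K ^ n * C) := by gcongr
        _ = K ^ (n + 1) * C := by ring
    intro x hx y hy
    rw [hfix] at hx hy
    simp only [mem_iUnion, mem_image] at hx hy
    obtain ⟨i, hi, x', hx', rfl⟩ := hx
    obtain ⟨j, hj, y', hy', rfl⟩ := hy
    obtain ⟨z, ⟨u, hu, rfl⟩, ⟨w, hw, hwu⟩⟩ := hmeet i hi j hj
    exact (hlift i hi x' hx' u hu).trans (hwu ▸ hlift j hj w hw y' hy')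

theorem IsCompact.isPreconnected_of_eq_iUnion_image {ι : Type*} {s : Set ι} {f : ι → X → X}
    {K : ℝ≥0} (hK : K < 1) (hf : ∀ i ∈ s, LipschitzWith K (f i)) {F : Set X}
    (hF : IsCompact F) (hfix : F = ⋃ i ∈ s, f i '' F)
    (hmeet : ∀ i ∈ s, ∀ j ∈ s, (f i '' F ∩ f j '' F).Nonempty) : IsPreconnected F := by
  obtain ⟨C, hC⟩ := isBounded_iff.1 hF.isBounded
  refine hF.isPreconnected_of_forall_chain fun ε hε x hx y hy => ?_
  have hsmall : Tendsto (fun n : ℕ => (K : ℝ) ^ n * C) atTop (𝓝 0) := by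
    simpa using (tendsto_pow_atTop_nhds_zero_of_lt_one K.coe_nonneg hK).mul_const C
  obtain ⟨n, hn⟩ := (hsmall.eventually (gt_mem_nhds hε)).exists
  exact Relation.ReflTransGen.mono (fun a b ⟨hb, hab⟩ => ⟨hb, hab.trans_lt hn⟩) _ _
    (chain_of_eq_iUnion_image hf hfix hmeet (fun a ha b hb => hC ha hb) n x hx y hy)

end ChainConnected

theorem ContractingWith.fixedPoint_mem {X : Type*} [MetricSpace X] [Nonempty X]
    [CompleteSpace X] {K : ℝ≥0} {f : X → X} (hf : ContractingWith K f) {F : Set X}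
    (hF : IsClosed F) (hne : F.Nonempty) (hmaps : MapsTo f F F) : fixedPoint f hf ∈ F := by
  obtain ⟨x, hx⟩ := hne
  exact hF.mem_of_tendsto (hf.tendsto_iterate_fixedPoint x)
    (Eventually.of_forall fun n => hmaps.iterate n hx)

section DigitMap

variable {n : ℕ}

-- The branch `φ_d x = T⁻¹(x + d)` of the attractor equation for `T = 2I`.
noncomputable def digitMap (d : Fin n → ℤ) (x : Fin n → ℝ) : Fin n → ℝ :=
  (2 : ℝ)⁻¹ • (x + castVec d)

theorem contractingWith_digitMap (d : Fin n → ℤ) : ContractingWith 2⁻¹ (digitMap d) := by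
  refine ⟨by norm_num, LipschitzWith.of_dist_le_mul fun x y => ?_⟩
  simp [digitMap, dist_smul₀, dist_add_right]

theorem digitMap_castVec_self (d : Fin n → ℤ) : digitMap d (castVec d) = castVec d := by
  simp only [digitMap]; module

theorem digitMap_castVec_comm (d e : Fin n → ℤ) :
    digitMap d (castVec e) = digitMap e (castVec d) := by
  simp only [digitMap, add_comm]

variable {D : Set (Fin n → ℤ)} {F : Set (Fin n → ℝ)}

theorem castVec_mem_of_eq_iUnion_digitMap (hF : IsClosed F) (hne : F.Nonempty)
    (hfix : F = ⋃ d ∈ D, digitMap d '' F) {d : Fin n → ℤ} (hd : d ∈ D) : castVec d ∈ F := by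
  have hcontr := contractingWith_digitMap d
  rw [hcontr.fixedPoint_unique (digitMap_castVec_self d)]
  exact hcontr.fixedPoint_mem hF hne (mapsTo_of_eq_iUnion_image hfix hd)

theorem isConnected_of_eq_iUnion_digitMap (hF : IsCompact F) (hne : F.Nonempty)
    (hfix : F = ⋃ d ∈ D, digitMap d '' F) : IsConnected F := by
  refine ⟨hne, hF.isPreconnected_of_eq_iUnion_image (by norm_num)
    (fun d _ => (contractingWith_digitMap d).2) hfix fun d hd e he => ?_⟩
  have hmem := fun {d} (hd : d ∈ D) => castVec_mem_of_eq_iUnion_digitMap hF.isClosed hne hfix hd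
  exact ⟨digitMap d (castVec e), mem_image_of_mem _ (hmem he),
    digitMap_castVec_comm e d ▸ mem_image_of_mem _ (hmem hd)⟩

end DigitMap

theorem MeasureTheory.Measure.pos_of_add_eq_univ {G : Type*} [AddGroup G] [MeasurableSpace G]
    [MeasurableAdd G] (μ : Measure G) [μ.IsAddRightInvariant] [NeZero μ] {F L : Set G}
    (hL : L.Countable) (hcover : F + L = univ) : 0 < μ F := by
  refine pos_iff_ne_zero.2 fun hF => NeZero.ne μ ?_
  rw [← measure_univ_eq_zero, ← hcover, ← iUnion_add_right_image]
  refine (measure_biUnion_null_iff hL).2 fun l _ => ?_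
  rw [image_add_right, measure_preimage_add_right, hF]

section Lattice

variable {n : ℕ}

theorem isClosed_range_castVec : IsClosed (range (castVec (k := n))) := by
  have : castVec (k := n) = Pi.map fun _ => ((↑) : ℤ → ℝ) := rfl
  rw [this, range_piMap]
  exact isClosed_set_pi fun _ _ => Int.isClosedEmbedding_coe_real.isClosed_range

theorem dist_inv_two_pow_smul_floor_le (x : Fin n → ℝ) (k : ℕ) :
    dist x ((2 : ℝ)⁻¹ ^ k • castVec fun i => ⌊2 ^ k * x i⌋) ≤ (2 : ℝ)⁻¹ ^ k := by
  refine (dist_pi_le_iff (by positivity)).2 fun i => ?_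
  have hfract :
      x i - (2 : ℝ)⁻¹ ^ k * ⌊2 ^ k * x i⌋ = (2 : ℝ)⁻¹ ^ k * Int.fract (2 ^ k * x i) := by
    rw [Int.fract, mul_sub, ← mul_assoc, ← mul_pow]; norm_num
  rw [Real.dist_eq]
  simp only [Pi.smul_apply, castVec, smul_eq_mul]
  rw [hfract, abs_of_nonneg (by positivity)]
  exact mul_le_of_le_one_right (by positivity) (Int.fract_lt_one _).le

theorem eq_univ_of_inv_two_smul_mem {S : Set (Fin n → ℝ)} (hS : IsClosed S)
    (hlat : range castVec ⊆ S) (hhalf : ∀ x ∈ S, (2 : ℝ)⁻¹ • x ∈ S) : S = univ := by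
  have hdyadic : ∀ k : ℕ, ∀ v, (2 : ℝ)⁻¹ ^ k • castVec v ∈ S := by
    intro k
    induction k with
    | zero => simpa using fun v => hlat (mem_range_self v)
    | succ k ih => intro v; rw [pow_succ', mul_smul]; exact hhalf _ (ih v)
  refine eq_univ_of_forall fun x => hS.closure_eq ▸ Metric.mem_closure_iff.2 fun ε hε => ?_
  obtain ⟨k, hk⟩ := exists_pow_lt_of_lt_one hε (by norm_num : (2 : ℝ)⁻¹ < 1)
  exact ⟨_, hdyadic k _, (dist_inv_two_pow_smul_floor_le x k).trans_lt hk⟩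

variable {D : Set (Fin n → ℤ)} {F : Set (Fin n → ℝ)}

theorem add_range_castVec_eq_univ (hF : IsCompact F) (hne : F.Nonempty)
    (hfix : F = ⋃ d ∈ D, digitMap d '' F) (hD : ∀ v, ∃ d ∈ D, ∃ w, v = d + 2 • w) :
    F + range castVec = univ := by
  refine eq_univ_of_inv_two_smul_mem (isClosed_range_castVec.add_left_of_isCompact hF) ?_ ?_
  · rintro _ ⟨v, rfl⟩
    obtain ⟨d, hd, -⟩ := hD 0
    refine ⟨castVec d, castVec_mem_of_eq_iUnion_digitMap hF.isClosed hne hfix hd,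
      castVec (v - d), mem_range_self _, funext fun i => ?_⟩
    simp [castVec]
  · rintro _ ⟨f, hf, _, ⟨v, rfl⟩, rfl⟩
    obtain ⟨d, hd, w, rfl⟩ := hD v
    refine ⟨digitMap d f, mapsTo_of_eq_iUnion_image hfix hd hf, castVec w, mem_range_self _,
      funext fun i => ?_⟩
    simp only [digitMap, castVec, Pi.add_apply, Pi.smul_apply, smul_eq_mul, nsmul_eq_mul,
      Nat.cast_ofNat, Pi.mul_apply, Pi.ofNat_apply, Int.cast_add, Int.cast_mul, Int.cast_ofNat]
    ring

theorem volume_pos_of_eq_iUnion_digitMap (hF : IsCompact F) (hne : F.Nonempty)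
    (hfix : F = ⋃ d ∈ D, digitMap d '' F) (hD : ∀ v, ∃ d ∈ D, ∃ w, v = d + 2 • w) :
    0 < volume F :=
  volume.pos_of_add_eq_univ (countable_range _) (add_range_castVec_eq_univ hF hne hfix hD)

end Lattice

def sierpinskiDigits : Finset (Fin 2 → ℤ) := {![0, 0], ![1, 0], ![0, 1], ![-1, -1]}

theorem exists_sierpinskiDigits_add_two_nsmul (v : Fin 2 → ℤ) :
    ∃ d ∈ sierpinskiDigits, ∃ w, v = d + 2 • w := by
  obtain ⟨a, ha | ha⟩ := Int.even_or_odd' (v 0) <;>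
  obtain ⟨b, hb | hb⟩ := Int.even_or_odd' (v 1)
  · refine ⟨![0, 0], by simp [sierpinskiDigits], ![a, b], funext fun i => ?_⟩
    fin_cases i <;> simp [ha, hb]
  · refine ⟨![0, 1], by simp [sierpinskiDigits], ![a, b], funext fun i => ?_⟩
    fin_cases i <;> simp [ha, hb, add_comm]
  · refine ⟨![1, 0], by simp [sierpinskiDigits], ![a, b], funext fun i => ?_⟩
    fin_cases i <;> simp [ha, hb, add_comm]
  · refine ⟨![-1, -1], by simp [sierpinskiDigits], ![a + 1, b + 1], funext fun i => ?_⟩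
    fin_cases i <;> simp [ha, hb] <;> ring

/-- For `T = 2I` (so `T⁻¹(x+d) = (1/2)•(x+d)`) and
`D = {(0,0)ᵀ, (1,0)ᵀ, (0,1)ᵀ, (-1,-1)ᵀ}`, the attractor `F(T,D)` (the Sierpiński tile,
the unique nonempty compact set with `F = ⋃_{d ∈ D} T⁻¹(F + d)`) is connected and has
positive Lebesgue measure. -/
theorem stmt13
    (D : Finset (Fin 2 → ℤ))
    (hD : D = {![0, 0], ![1, 0], ![0, 1], ![-1, -1]})
    (F : Set (Fin 2 → ℝ)) (hne : F.Nonempty) (hcpt : IsCompact F)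
    (hfix : F = ⋃ d ∈ D, (fun x => (2 : ℝ)⁻¹ • (x + castVec d)) '' F) :
    IsConnected F ∧ 0 < volume F := by
  subst hD
  exact ⟨isConnected_of_eq_iUnion_digitMap hcpt hne hfix,
    volume_pos_of_eq_iUnion_digitMap hcpt hne hfix exists_sierpinskiDigits_add_two_nsmul⟩
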